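/- arXiv:quant-ph/0507115 — 4 statements merged into one kernel-verified Lean document; each statement's English description precedes it below -/
import Mathlib

section
/- Let S : ℝ → ℝ → ℝ satisfy the additivity property S λ₁ λ₀ = S λ₁ λ + S λ λ₀ for all real λ₀, λ, λ₁, and suppose that for every λ ∈ ℝ the function λ' ↦ S λ' λ is differentiable at λ' = λ with derivative L λ, where L : ℝ → ℝ is continuous. Then for all λ₀, λ ∈ ℝ, one has S λ λ₀ = ∫_{λ₀}^{λ} L(λ') dλ'. -/
open intervalIntegral

section AdditivePhase

variable {α G : Type*} [AddGroup G] {S : α → α → G}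

theorem self_eq_zero_of_additive (hadd : ∀ a b c : α, S c a = S c b + S b a) (a : α) :
    S a a = 0 :=
  left_eq_add.mp (hadd a a a)

theorem eq_add_of_additive (hadd : ∀ a b c : α, S c a = S c b + S b a) (a b : α) :
    (fun c => S c a) = fun c => S c b + S b a :=
  funext (hadd a b)

end AdditivePhase

theorem hasDerivAt_of_additive {𝕜 F : Type*} [NontriviallyNormedField 𝕜]
    [NormedAddCommGroup F] [NormedSpace 𝕜 F] {S : 𝕜 → 𝕜 → F} {L : 𝕜 → F}
    (hadd : ∀ a b c : 𝕜, S c a = S c b + S b a)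
    (hdiff : ∀ x : 𝕜, HasDerivAt (fun y => S y x) (L x) x) (a x : 𝕜) :
    HasDerivAt (fun y => S y a) (L x) x := by
  rw [eq_add_of_additive hadd a x]
  exact (hdiff x).add_const (S x a)

/-- **Form of the Phase Functional** (Appendix A of the paper).
If the phase functional `S l' l` is additive over concatenation of parameter
intervals, and for each `l` the map `l' ↦ S l' l` has derivative `L l` at
`l' = l`, with `L` continuous, then `S l l₀ = ∫_{l₀}^{l} L`. -/
theorem phase_functional_eq_integral
    (S : ℝ → ℝ → ℝ) (L : ℝ → ℝ)
    (hadd : ∀ l₀ l l₁ : ℝ, S l₁ l₀ = S l₁ l + S l l₀)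
    (hdiff : ∀ l : ℝ, HasDerivAt (fun l' => S l' l) (L l) l)
    (hL : Continuous L) :
    ∀ (l₀ l : ℝ), S l l₀ = ∫ l' in l₀..l, L l' := by
  intro l₀ l
  rw [integral_eq_sub_of_hasDerivAt (fun x _ => hasDerivAt_of_additive hadd hdiff l₀ x)
    (hL.intervalIntegrable l₀ l), self_eq_zero_of_additive hadd l₀, sub_zero]
end

section
/- For every real m, every T > 0, and every (x⁰, x⃗) ∈ ℝ × ℝ³, the limit as ε → 0⁺ of (2π)^{−4} ∫_{ℝ⁴} exp(−ε((p⁰)² + |p⃗|²)) · exp(i(−p⁰x⁰ + p⃗·x⃗)) · exp(−iT(−(p⁰)² + |p⃗|² + m²)) dp exists and equals −i (4πT)^{−2} · exp( i(−(x⁰)² + |x⃗|²)/(4T) ) · exp(−iTm²). -/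
open MeasureTheory Complex Filter

noncomputable def Gk (m T x0 : ℝ) (xv : EuclideanSpace ℝ (Fin 3)) (ε : ℝ) : ℂ :=
  ((2 * Real.pi : ℂ)) ^ (-4 : ℤ) *
    ((((Real.pi : ℂ) / -(Complex.I * (T:ℂ) - (ε:ℂ))) ^ (1/2 : ℂ) *
        Complex.exp (0 - (-(Complex.I * (x0:ℂ))) ^ 2 / (4 * (Complex.I * (T:ℂ) - (ε:ℂ)))) *
      ((((Real.pi : ℂ) / ((ε:ℂ) + Complex.I * (T:ℂ))) ^ ((3:ℂ) / 2) *
          Complex.exp (Complex.I ^ 2 * (‖xv‖:ℂ) ^ 2 / (4 * ((ε:ℂ) + Complex.I * (T:ℂ))))) *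
        Complex.exp (-(Complex.I * (T:ℂ) * ((m:ℂ)) ^ 2)))))

lemma step1 (m T x0 : ℝ) (hT : 0 < T) (xv : EuclideanSpace ℝ (Fin 3)) {ε : ℝ} (hε : 0 < ε) :
    ((2 * Real.pi : ℂ)) ^ (-4 : ℤ) *
        ∫ p : ℝ × EuclideanSpace ℝ (Fin 3),
          Complex.exp (-((ε * (p.1 ^ 2 + ‖p.2‖ ^ 2) : ℝ) : ℂ)) *
            Complex.exp (Complex.I * ((-(p.1 * x0) + (inner ℝ p.2 xv : ℝ) : ℝ) : ℂ)) *
            Complex.exp (-Complex.I * (T : ℂ) *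
              ((-(p.1 ^ 2) + ‖p.2‖ ^ 2 + m ^ 2 : ℝ) : ℂ)) = Gk m T x0 xv ε := by
  have hsplit : (fun p : ℝ × EuclideanSpace ℝ (Fin 3) =>
      Complex.exp (-((ε * (p.1 ^ 2 + ‖p.2‖ ^ 2) : ℝ) : ℂ)) *
        Complex.exp (Complex.I * ((-(p.1 * x0) + (inner ℝ p.2 xv : ℝ) : ℝ) : ℂ)) *
        Complex.exp (-Complex.I * (T : ℂ) * ((-(p.1 ^ 2) + ‖p.2‖ ^ 2 + m ^ 2 : ℝ) : ℂ)))
      = fun p : ℝ × EuclideanSpace ℝ (Fin 3) =>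
        (fun u : ℝ => Complex.exp ((Complex.I * (T:ℂ) - (ε:ℂ)) * (u:ℂ) ^ 2 +
            (-(Complex.I * (x0:ℂ))) * (u:ℂ) + 0)) p.1 *
        ((fun v : EuclideanSpace ℝ (Fin 3) =>
            Complex.exp (-((ε:ℂ) + Complex.I * (T:ℂ)) * (‖v‖:ℂ) ^ 2 +
              Complex.I * ((inner ℝ xv v : ℝ) : ℂ)) *
            Complex.exp (-(Complex.I * (T:ℂ) * ((m:ℂ)) ^ 2))) p.2) := by
    funext p
    simp only [← Complex.exp_add]
    congr 1
    rw [real_inner_comm xv p.2]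
    push_cast
    ring
  rw [hsplit, MeasureTheory.Measure.volume_eq_prod,
    MeasureTheory.integral_prod_mul
      (fun u : ℝ => Complex.exp ((Complex.I * (T:ℂ) - (ε:ℂ)) * (u:ℂ) ^ 2 +
          (-(Complex.I * (x0:ℂ))) * (u:ℂ) + 0))
      (fun v : EuclideanSpace ℝ (Fin 3) =>
          Complex.exp (-((ε:ℂ) + Complex.I * (T:ℂ)) * (‖v‖:ℂ) ^ 2 +
            Complex.I * ((inner ℝ xv v : ℝ) : ℂ)) *
          Complex.exp (-(Complex.I * (T:ℂ) * ((m:ℂ)) ^ 2))),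
    MeasureTheory.integral_mul_const,
    integral_cexp_quadratic (by simp [hε] : (Complex.I * (T:ℂ) - (ε:ℂ)).re < 0)
      (-(Complex.I * (x0:ℂ))) 0,
    GaussianFourier.integral_cexp_neg_mul_sq_norm_add
      (by simp [hε] : (0:ℝ) < ((ε:ℂ) + Complex.I * (T:ℂ)).re) Complex.I xv]
  simp only [Gk, finrank_euclideanSpace_fin]
  norm_num

lemma exp_neg_pi_div_two_mul_I : Complex.exp (-((Real.pi:ℂ) / 2) * Complex.I) = -Complex.I := by
  have h : (-((Real.pi:ℂ)/2) : ℂ) = ((-(Real.pi/2) : ℝ) : ℂ) := by push_cast; ring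
  rw [h, Complex.exp_mul_I, ← Complex.ofReal_cos, ← Complex.ofReal_sin,
    Real.cos_neg, Real.sin_neg, Real.cos_pi_div_two, Real.sin_pi_div_two]
  push_cast
  ring

lemma log_ofReal_mul_I {a : ℝ} (ha : 0 < a) :
    Complex.log ((a:ℂ) * Complex.I) = (Real.log a : ℂ) + ((Real.pi:ℂ) / 2) * Complex.I := by
  rw [Complex.log]
  have h1 : ‖(a:ℂ) * Complex.I‖ = a := by
    simp [map_mul, abs_of_pos ha]
  have h2 : Complex.arg ((a:ℂ) * Complex.I) = Real.pi / 2 := by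
    rw [Complex.arg_eq_pi_div_two_iff]
    constructor <;> simp [ha]
  rw [h1, h2]
  push_cast
  ring

lemma log_neg_ofReal_mul_I {a : ℝ} (ha : 0 < a) :
    Complex.log (-((a:ℂ) * Complex.I)) = (Real.log a : ℂ) - ((Real.pi:ℂ) / 2) * Complex.I := by
  rw [Complex.log]
  have h1 : ‖-((a:ℂ) * Complex.I)‖ = a := by
    simp [map_mul, abs_of_pos ha]
  have h2 : Complex.arg (-((a:ℂ) * Complex.I)) = -(Real.pi / 2) := by
    rw [Complex.arg_eq_neg_pi_div_two_iff]
    constructor <;> simp [ha]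
  rw [h1, h2]
  push_cast
  ring

lemma cpow_key {a : ℝ} (ha : 0 < a) :
    ((a:ℂ) * Complex.I) ^ (1/2 : ℂ) * (-((a:ℂ) * Complex.I)) ^ ((3:ℂ)/2)
      = -Complex.I * (a:ℂ) ^ 2 := by
  have h0 : ((a:ℂ) * Complex.I) ≠ 0 := by
    simp [Complex.I_ne_zero, Complex.ofReal_ne_zero, ha.ne']
  have h0' : -((a:ℂ) * Complex.I) ≠ 0 := neg_ne_zero.mpr h0
  rw [Complex.cpow_def_of_ne_zero h0, Complex.cpow_def_of_ne_zero h0',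
    log_ofReal_mul_I ha, log_neg_ofReal_mul_I ha, ← Complex.exp_add]
  have : ((Real.log a : ℂ) + ((Real.pi:ℂ) / 2) * Complex.I) * (1/2)
      + ((Real.log a : ℂ) - ((Real.pi:ℂ) / 2) * Complex.I) * ((3:ℂ)/2)
      = ((2 * Real.log a : ℝ) : ℂ) + (-((Real.pi:ℂ)/2) * Complex.I) := by
    push_cast; ring
  rw [this, Complex.exp_add, _root_.exp_neg_pi_div_two_mul_I, ← Complex.ofReal_exp]
  have h3 : Real.exp (2 * Real.log a) = a ^ 2 := by
    rw [two_mul, Real.exp_add, Real.exp_log ha]; ring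
  rw [h3]
  push_cast
  ring

lemma step3 (m T x0 : ℝ) (hT : 0 < T) (xv : EuclideanSpace ℝ (Fin 3)) :
    Gk m T x0 xv 0 = -Complex.I * ((4 * Real.pi * T : ℂ)) ^ (-2 : ℤ) *
        Complex.exp (Complex.I * (((-x0 ^ 2 + ‖xv‖ ^ 2) / (4 * T) : ℝ) : ℂ)) *
        Complex.exp (-Complex.I * (T : ℂ) * (m ^ 2 : ℂ)) := by
  have hπ := Real.pi_pos
  have ha : (0:ℝ) < Real.pi / T := by positivity
  have hTC : (T:ℂ) ≠ 0 := Complex.ofReal_ne_zero.mpr hT.ne'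
  have hb1 : ((Real.pi : ℂ) / -(Complex.I * (T:ℂ) - (0:ℝ))) = ((Real.pi / T : ℝ):ℂ) * Complex.I := by
    rw [div_eq_iff (by simp [Complex.I_ne_zero, hTC, Complex.ext_iff, hT.ne'] : -(Complex.I * (T:ℂ) - ((0:ℝ):ℂ)) ≠ 0)]
    push_cast
    have := Complex.I_sq
    field_simp
    linear_combination (T : ℂ) * Complex.I_sq
  have hb2 : ((Real.pi : ℂ) / (((0:ℝ):ℂ) + Complex.I * (T:ℂ))) = -(((Real.pi / T : ℝ):ℂ) * Complex.I) := by
    rw [div_eq_iff (by simp [Complex.ext_iff, hT.ne'] : (((0:ℝ):ℂ) + Complex.I * (T:ℂ)) ≠ 0)]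
    push_cast
    field_simp
    linear_combination (T : ℂ) * Complex.I_sq
  rw [Gk, hb1, hb2]
  have hc := cpow_key ha
  have hexp : Complex.exp (0 - (-(Complex.I * (x0:ℂ))) ^ 2 / (4 * (Complex.I * (T:ℂ) - (((0:ℝ)):ℂ)))) *
      Complex.exp (Complex.I ^ 2 * (‖xv‖:ℂ) ^ 2 / (4 * ((((0:ℝ)):ℂ) + Complex.I * (T:ℂ)))) =
      Complex.exp (Complex.I * (((-x0 ^ 2 + ‖xv‖ ^ 2) / (4 * T) : ℝ) : ℂ)) := by
    rw [← Complex.exp_add]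
    congr 1
    push_cast
    have hI4T : (4 : ℂ) * (Complex.I * (T:ℂ)) ≠ 0 := by
      simp [Complex.I_ne_zero, hTC]
    field_simp
    ring_nf
  have hconst : ((2 * Real.pi : ℂ)) ^ (-4 : ℤ) * (-Complex.I * (((Real.pi / T : ℝ)):ℂ) ^ 2) =
      -Complex.I * ((4 * Real.pi * T : ℂ)) ^ (-2 : ℤ) := by
    have e1 : ((2 * Real.pi : ℂ)) ^ (-4 : ℤ) = (((2 * Real.pi : ℂ)) ^ (4:ℕ))⁻¹ := by
      rw [show ((-4:ℤ)) = -((4:ℕ):ℤ) from rfl, zpow_neg, zpow_natCast]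
    have e2 : ((4 * Real.pi * T : ℂ)) ^ (-2 : ℤ) = (((4 * Real.pi * T : ℂ)) ^ (2:ℕ))⁻¹ := by
      rw [show ((-2:ℤ)) = -((2:ℕ):ℤ) from rfl, zpow_neg, zpow_natCast]
    rw [e1, e2]
    push_cast
    rw [div_pow]
    have h2π : ((2:ℂ) * Real.pi) ^ (4:ℕ) ≠ 0 := by
      apply pow_ne_zero
      simp [Real.pi_ne_zero]
    have h4πT : ((4:ℂ) * Real.pi * T) ^ (2:ℕ) ≠ 0 := by
      apply pow_ne_zero
      simp [Real.pi_ne_zero, hT.ne']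
    field_simp
    ring
  calc ((2 * Real.pi : ℂ)) ^ (-4 : ℤ) *
      ((((Real.pi / T : ℝ):ℂ) * Complex.I) ^ (1/2 : ℂ) *
        Complex.exp (0 - (-(Complex.I * (x0:ℂ))) ^ 2 / (4 * (Complex.I * (T:ℂ) - (((0:ℝ)):ℂ)))) *
        ((-(((Real.pi / T : ℝ):ℂ) * Complex.I)) ^ ((3:ℂ)/2) *
          Complex.exp (Complex.I ^ 2 * (‖xv‖:ℂ) ^ 2 / (4 * ((((0:ℝ)):ℂ) + Complex.I * (T:ℂ)))) *
          Complex.exp (-(Complex.I * (T:ℂ) * ((m:ℂ)) ^ 2))))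
      = ((2 * Real.pi : ℂ)) ^ (-4 : ℤ) *
        (((((Real.pi / T : ℝ):ℂ) * Complex.I) ^ (1/2 : ℂ) *
            (-(((Real.pi / T : ℝ):ℂ) * Complex.I)) ^ ((3:ℂ)/2)) *
          ((Complex.exp (0 - (-(Complex.I * (x0:ℂ))) ^ 2 / (4 * (Complex.I * (T:ℂ) - (((0:ℝ)):ℂ)))) *
            Complex.exp (Complex.I ^ 2 * (‖xv‖:ℂ) ^ 2 / (4 * ((((0:ℝ)):ℂ) + Complex.I * (T:ℂ))))) *
          Complex.exp (-(Complex.I * (T:ℂ) * ((m:ℂ)) ^ 2)))) := by ring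
    _ = -Complex.I * ((4 * Real.pi * T : ℂ)) ^ (-2 : ℤ) *
        Complex.exp (Complex.I * (((-x0 ^ 2 + ‖xv‖ ^ 2) / (4 * T) : ℝ) : ℂ)) *
        Complex.exp (-Complex.I * (T : ℂ) * (m ^ 2 : ℂ)) := by
      rw [hc, hexp, ← mul_assoc, hconst]
      push_cast
      ring

lemma step2 (m T x0 : ℝ) (hT : 0 < T) (xv : EuclideanSpace ℝ (Fin 3)) :
    Tendsto (fun ε : ℝ => Gk m T x0 xv ε) (nhdsWithin 0 (Set.Ioi 0)) (nhds (Gk m T x0 xv 0)) := by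
  have hTC : (T:ℂ) ≠ 0 := Complex.ofReal_ne_zero.mpr hT.ne'
  have hden1 : ∀ ε : ℝ, -(Complex.I * (T:ℂ) - (ε:ℂ)) ≠ 0 := by
    intro ε
    simp only [neg_ne_zero, sub_ne_zero]
    intro h
    have := congrArg Complex.im h
    simp [hT.ne'] at this
  have hden2 : ∀ ε : ℝ, ((ε:ℂ) + Complex.I * (T:ℂ)) ≠ 0 := by
    intro ε
    intro h
    have := congrArg Complex.im h
    simp [hT.ne'] at this
  have hden3 : ∀ ε : ℝ, (4 * (Complex.I * (T:ℂ) - (ε:ℂ))) ≠ 0 := by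
    intro ε
    simpa [neg_ne_zero] using mul_ne_zero (by norm_num : (4:ℂ) ≠ 0) (neg_ne_zero.mp (hden1 ε))
  have hden4 : ∀ ε : ℝ, (4 * ((ε:ℂ) + Complex.I * (T:ℂ))) ≠ 0 := fun ε =>
    mul_ne_zero (by norm_num) (hden2 ε)
  have hcR : Continuous fun ε : ℝ => (ε : ℂ) := Complex.continuous_ofReal
  have hf1 : ContinuousAt (fun ε : ℝ => (Real.pi:ℂ) / -(Complex.I * (T:ℂ) - (ε:ℂ))) 0 :=
    ContinuousAt.div continuousAt_const ((continuous_const.sub hcR).neg.continuousAt) (hden1 0)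
  have hf2 : ContinuousAt (fun ε : ℝ => (Real.pi:ℂ) / ((ε:ℂ) + Complex.I * (T:ℂ))) 0 :=
    ContinuousAt.div continuousAt_const ((hcR.add continuous_const).continuousAt) (hden2 0)
  have hs1 : ((Real.pi:ℂ) / -(Complex.I * (T:ℂ) - (((0:ℝ)):ℂ))) ∈ Complex.slitPlane := by
    rw [Complex.mem_slitPlane_iff]
    right
    rw [Complex.div_im]
    simp [Real.pi_ne_zero, hT.ne', div_eq_zero_iff]
  have hs2 : ((Real.pi:ℂ) / (((0:ℝ):ℂ) + Complex.I * (T:ℂ))) ∈ Complex.slitPlane := by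
    rw [Complex.mem_slitPlane_iff]
    right
    rw [Complex.div_im]
    simp [Real.pi_ne_zero, hT.ne', div_eq_zero_iff]
  have hA : ContinuousAt (fun ε : ℝ =>
      ((Real.pi:ℂ) / -(Complex.I * (T:ℂ) - (ε:ℂ))) ^ (1/2 : ℂ)) 0 :=
    ContinuousAt.cpow hf1 continuousAt_const hs1
  have hB : ContinuousAt (fun ε : ℝ =>
      ((Real.pi:ℂ) / ((ε:ℂ) + Complex.I * (T:ℂ))) ^ ((3:ℂ)/2)) 0 :=
    ContinuousAt.cpow hf2 continuousAt_const hs2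
  have hE1 : ContinuousAt (fun ε : ℝ =>
      Complex.exp (0 - (-(Complex.I * (x0:ℂ))) ^ 2 / (4 * (Complex.I * (T:ℂ) - (ε:ℂ))))) 0 :=
    Complex.continuous_exp.continuousAt.comp
      (ContinuousAt.sub continuousAt_const
        (ContinuousAt.div continuousAt_const
          ((continuous_const.mul (continuous_const.sub hcR)).continuousAt) (hden3 0)))
  have hE2 : ContinuousAt (fun ε : ℝ =>
      Complex.exp (Complex.I ^ 2 * (‖xv‖:ℂ) ^ 2 / (4 * ((ε:ℂ) + Complex.I * (T:ℂ))))) 0 :=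
    Complex.continuous_exp.continuousAt.comp
      (ContinuousAt.div continuousAt_const
        ((continuous_const.mul (hcR.add continuous_const)).continuousAt) (hden4 0))
  have hG : ContinuousAt (fun ε : ℝ => Gk m T x0 xv ε) 0 := by
    unfold Gk
    exact continuousAt_const.mul
      ((hA.mul hE1).mul ((hB.mul hE2).mul continuousAt_const))
  exact hG.tendsto.mono_left nhdsWithin_le_nhds

/-- **Evaluation of the free-particle kernel** (Theorem "Evaluation of the Path
Integral"). For all real `m`, `T > 0` and `(x⁰, x⃗) ∈ ℝ × ℝ³`, the regularized
momentum integral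
`(2π)⁻⁴ ∫_{ℝ⁴} e^{−ε‖p‖²} e^{i p·x} e^{−iT(p² + m²)} d⁴p`,
with `p·x = −p⁰x⁰ + p⃗·x⃗` and `p² = −(p⁰)² + |p⃗|²` (signature `(−,+,+,+)`),
tends, as `ε → 0⁺`, to `−i (4πT)⁻² e^{i(−(x⁰)² + |x⃗|²)/(4T)} e^{−iTm²}`. -/
theorem free_particle_kernel_eval (m T : ℝ) (hT : 0 < T)
    (x0 : ℝ) (xv : EuclideanSpace ℝ (Fin 3)) :
    Tendsto
      (fun ε : ℝ =>
        ((2 * Real.pi : ℂ)) ^ (-4 : ℤ) *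
        ∫ p : ℝ × EuclideanSpace ℝ (Fin 3),
          Complex.exp (-((ε * (p.1 ^ 2 + ‖p.2‖ ^ 2) : ℝ) : ℂ)) *
            Complex.exp (Complex.I * ((-(p.1 * x0) + (inner ℝ p.2 xv : ℝ) : ℝ) : ℂ)) *
            Complex.exp (-Complex.I * (T : ℂ) *
              ((-(p.1 ^ 2) + ‖p.2‖ ^ 2 + m ^ 2 : ℝ) : ℂ)))
      (nhdsWithin 0 (Set.Ioi 0))
      (nhds (-Complex.I * ((4 * Real.pi * T : ℂ)) ^ (-2 : ℤ) *
        Complex.exp (Complex.I * (((-x0 ^ 2 + ‖xv‖ ^ 2) / (4 * T) : ℝ) : ℂ)) *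
        Complex.exp (-Complex.I * (T : ℂ) * (m ^ 2 : ℂ)))) := by
  have h := step2 m T x0 hT xv
  rw [step3 m T x0 hT xv] at h
  refine Filter.Tendsto.congr' ?_ h
  filter_upwards [self_mem_nhdsWithin] with ε hε
  exact (step1 m T x0 hT xv hε).symm
end

section
/- Let N ≥ 1, let a₁, …, a_N be complex numbers with Re a_j > 0 for all j, and let y₀, y_N ∈ ℝ. Then ∫_{ℝ^{N−1}} ∏_{j=1}^{N} (4π a_j)^{−1/2} exp( −(y_j − y_{j−1})² / (4 a_j) ) dy₁ ⋯ dy_{N−1} = (4π(a₁ + ⋯ + a_N))^{−1/2} exp( −(y_N − y₀)² / (4(a₁ + ⋯ + a_N)) ), where the integral over the intermediate variables y₁, …, y_{N−1} is an absolutely convergent Lebesgue integral. -/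
open MeasureTheory Complex

/-- The chain of points `y₀, y₁, …, y_N` used in the discretized path integral:
the endpoints `y₀`, `y_N` are fixed and the intermediate points are the
integration variables `z : Fin (N-1) → α`. -/
def chainPoint {α : Type*} (N : ℕ) (y0 yN : α) (z : Fin (N - 1) → α)
    (k : Fin (N + 1)) : α :=
  if _h0 : (k : ℕ) = 0 then y0
  else if _hN : (k : ℕ) = N then yN
  else z ⟨(k : ℕ) - 1, by have := k.isLt; omega⟩

noncomputable def gk (a : ℂ) (u : ℝ) : ℂ :=
  (4 * (Real.pi : ℂ) * a) ^ (-(1 / 2) : ℂ) *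
    Complex.exp (-((u ^ 2 : ℝ) : ℂ) / (4 * a))

lemma inv_re_pos' {z : ℂ} (hz : 0 < z.re) : 0 < z⁻¹.re := by
  rw [Complex.inv_re]
  exact div_pos hz (Complex.normSq_pos.2 (by intro h; simp [h] at hz))

lemma ne_zero_of_re_pos' {z : ℂ} (hz : 0 < z.re) : z ≠ 0 := by
  intro h; simp [h] at hz

lemma sqrt_mul_sqrt_re_pos {u v : ℂ} (hu : 0 < u.re) (hv : 0 < v.re) :
    0 < (u ^ (1/2 : ℂ) * v ^ (1/2 : ℂ)).re := by
  have hu0 := ne_zero_of_re_pos' hu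
  have hv0 := ne_zero_of_re_pos' hv
  rw [Complex.cpow_def_of_ne_zero hu0, Complex.cpow_def_of_ne_zero hv0, ← Complex.exp_add,
    Complex.exp_re]
  have him : (Complex.log u * (1/2) + Complex.log v * (1/2)).im = (u.arg + v.arg) / 2 := by
    simp [Complex.add_im, Complex.mul_im, Complex.log_im]
    ring
  rw [him]
  have h1 : |u.arg| < Real.pi / 2 := Complex.abs_arg_lt_pi_div_two_iff.2 (Or.inl hu)
  have h2 : |v.arg| < Real.pi / 2 := Complex.abs_arg_lt_pi_div_two_iff.2 (Or.inl hv)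
  rw [abs_lt] at h1 h2
  exact mul_pos (Real.exp_pos _)
    (Real.cos_pos_of_mem_Ioo ⟨by linarith [h1.1, h2.1], by linarith [h1.2, h2.2]⟩)

lemma sq_sqrt' {u : ℂ} (hu : u ≠ 0) : u ^ (1/2 : ℂ) * u ^ (1/2 : ℂ) = u := by
  rw [← Complex.cpow_add _ _ hu]; norm_num

lemma sqrt_mul_sqrt_eq {u v w x : ℂ} (hu : 0 < u.re) (hv : 0 < v.re) (hw : 0 < w.re)
    (hx : 0 < x.re) (huv : u * v = w * x) :
    u ^ (1/2 : ℂ) * v ^ (1/2 : ℂ) = w ^ (1/2 : ℂ) * x ^ (1/2 : ℂ) := by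
  have h1 := sqrt_mul_sqrt_re_pos hu hv
  have h2 := sqrt_mul_sqrt_re_pos hw hx
  have hsq : (u ^ (1/2:ℂ) * v ^ (1/2:ℂ)) * (u ^ (1/2:ℂ) * v ^ (1/2:ℂ))
      = (w ^ (1/2:ℂ) * x ^ (1/2:ℂ)) * (w ^ (1/2:ℂ) * x ^ (1/2:ℂ)) := by
    have hu0 := ne_zero_of_re_pos' hu
    have hv0 := ne_zero_of_re_pos' hv
    have hw0 := ne_zero_of_re_pos' hw
    have hx0 := ne_zero_of_re_pos' hx
    calc (u ^ (1/2:ℂ) * v ^ (1/2:ℂ)) * (u ^ (1/2:ℂ) * v ^ (1/2:ℂ))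
        = (u ^ (1/2:ℂ) * u ^ (1/2:ℂ)) * (v ^ (1/2:ℂ) * v ^ (1/2:ℂ)) := by ring
      _ = u * v := by rw [sq_sqrt' hu0, sq_sqrt' hv0]
      _ = w * x := huv
      _ = (w ^ (1/2:ℂ) * w ^ (1/2:ℂ)) * (x ^ (1/2:ℂ) * x ^ (1/2:ℂ)) := by
            rw [sq_sqrt' hw0, sq_sqrt' hx0]
      _ = (w ^ (1/2:ℂ) * x ^ (1/2:ℂ)) * (w ^ (1/2:ℂ) * x ^ (1/2:ℂ)) := by ring
  rcases mul_self_eq_mul_self_iff.1 hsq with h | h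
  · exact h
  · exfalso
    rw [h] at h1
    simp only [Complex.neg_re] at h1
    linarith

lemma gk_conv {a b : ℂ} (ha : 0 < a.re) (hb : 0 < b.re) (x z : ℝ) :
    Integrable (fun y : ℝ => gk a (y - x) * gk b (z - y)) ∧
      ∫ y : ℝ, gk a (y - x) * gk b (z - y) = gk (a + b) (z - x) := by
  have ha0 := ne_zero_of_re_pos' ha
  have hb0 := ne_zero_of_re_pos' hb
  have hab : 0 < (a + b).re := by simp only [Complex.add_re]; linarith
  have hab0 := ne_zero_of_re_pos' hab
  have h4a : (4*a : ℂ) ≠ 0 := by simp [ha0]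
  have h4b : (4*b : ℂ) ≠ 0 := by simp [hb0]
  have h2a : (2*a : ℂ) ≠ 0 := by simp [ha0]
  have h2b : (2*b : ℂ) ≠ 0 := by simp [hb0]
  set β : ℂ := -((4*a)⁻¹ + (4*b)⁻¹) with hβ
  have hβre : β.re < 0 := by
    have h1 : 0 < ((4*a)⁻¹).re := inv_re_pos' (by simp [Complex.mul_re]; linarith)
    have h2 : 0 < ((4*b)⁻¹).re := inv_re_pos' (by simp [Complex.mul_re]; linarith)
    simp only [hβ, Complex.neg_re, Complex.add_re]
    linarith
  have hβ' : β = -((a+b) / (4*(a*b))) := by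
    rw [hβ]
    congr 1
    rw [inv_eq_one_div, inv_eq_one_div, div_add_div _ _ h4a h4b,
      div_eq_div_iff (mul_ne_zero h4a h4b) (by simp [ha0, hb0])]
    ring
  set c : ℂ := (x : ℂ) / (2*a) + (z : ℂ) / (2*b) with hc
  set d : ℂ := -((x:ℝ)^2 : ℝ) / (4*a) - (((z:ℝ)^2 : ℝ) : ℂ) / (4*b) with hd
  have hexp : ∀ y : ℝ, gk a (y - x) * gk b (z - y) =
      ((4 * (Real.pi:ℂ) * a) ^ (-(1/2) : ℂ) * (4 * (Real.pi:ℂ) * b) ^ (-(1/2) : ℂ)) *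
        Complex.exp (β * (y:ℂ)^2 + c * y + d) := by
    intro y
    unfold gk
    rw [mul_mul_mul_comm, ← Complex.exp_add]
    congr 1
    congr 1
    rw [hβ, hc, hd]
    push_cast
    rw [inv_eq_one_div, inv_eq_one_div, div_add_div _ _ h4a h4b, div_add_div _ _ h2a h2b,
      div_add_div _ _ h4a h4b, ← neg_div, div_mul_eq_mul_div, div_mul_eq_mul_div,
      div_sub_div _ _ h4a h4b,
      div_add_div _ _ (mul_ne_zero h4a h4b) (mul_ne_zero h2a h2b),
      div_add_div _ _ (mul_ne_zero (mul_ne_zero h4a h4b) (mul_ne_zero h2a h2b)) (mul_ne_zero h4a h4b),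
      div_eq_div_iff (mul_ne_zero h4a h4b) (mul_ne_zero (mul_ne_zero (mul_ne_zero h4a h4b) (mul_ne_zero h2a h2b)) (mul_ne_zero h4a h4b))]
    ring
  constructor
  · rw [funext hexp]
    exact (integrable_cexp_quadratic' hβre c d).const_mul _
  · rw [integral_congr_ae (Filter.Eventually.of_forall hexp), integral_const_mul,
      integral_cexp_quadratic hβre c d]
    have h4ab : (4*(a*b) : ℂ) ≠ 0 := by simp [ha0, hb0]
    have hquad : d - c^2 / (4*β) = -(((z - x)^2 : ℝ) : ℂ) / (4*(a+b)) := by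
      rw [hd, hc, hβ']
      push_cast
      rw [mul_neg, div_neg, sub_neg_eq_add, ← mul_div_assoc, div_div_eq_mul_div,
        div_add_div _ _ h2a h2b, div_pow, div_mul_eq_mul_div, div_div,
        div_sub_div _ _ h4a h4b,
        div_add_div _ _ (mul_ne_zero h4a h4b)
          (mul_ne_zero (by exact pow_ne_zero 2 (mul_ne_zero h2a h2b)) (by simp [hab0])),
        div_eq_div_iff
          (mul_ne_zero (mul_ne_zero h4a h4b)
            (mul_ne_zero (pow_ne_zero 2 (mul_ne_zero h2a h2b)) (by simp [hab0])))
          (by simp [hab0])]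
      ring
    have hbase : (Real.pi : ℂ) / -β = 4 * Real.pi * (a * b / (a + b)) := by
      rw [hβ', neg_neg, div_div_eq_mul_div, ← mul_div_assoc,
        div_eq_div_iff hab0 hab0]
      ring
    rw [hquad, hbase]
    unfold gk
    rw [← mul_assoc]
    congr 1
    have hπ : (0:ℝ) < Real.pi := Real.pi_pos
    have hu : 0 < (4 * (Real.pi:ℂ) * a).re := by simp [Complex.mul_re]; nlinarith
    have hv : 0 < (4 * (Real.pi:ℂ) * b).re := by simp [Complex.mul_re]; nlinarith
    have hw : 0 < (4 * (Real.pi:ℂ) * (a+b)).re := by simp [Complex.mul_re]; nlinarith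
    have habq : 0 < (a * b / (a+b)).re := by
      have hrw : a * b / (a + b) = (a⁻¹ + b⁻¹)⁻¹ := by
        rw [inv_eq_one_div a, inv_eq_one_div b, div_add_div _ _ ha0 hb0, one_mul, mul_one,
          inv_div, add_comm b a]
      rw [hrw]
      refine inv_re_pos' ?_
      have := inv_re_pos' ha; have := inv_re_pos' hb
      simp only [Complex.add_re]; linarith
    have hx' : 0 < (4 * (Real.pi:ℂ) * (a * b / (a+b))).re := by
      rw [show (4 * (Real.pi:ℂ) * (a * b / (a+b))) = ((4*Real.pi : ℝ):ℂ) * (a*b/(a+b)) by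
        push_cast; ring]
      rw [Complex.re_ofReal_mul]
      positivity
    have hcan : a * b / (a + b) * (a + b) = a * b := div_mul_cancel₀ _ hab0
    have key := sqrt_mul_sqrt_eq hw hx' hu hv (by
      linear_combination (16 * (Real.pi:ℂ)^2) * hcan)
    have hne : ∀ {w : ℂ}, 0 < w.re → w ^ (1/2 : ℂ) ≠ 0 := fun h => by
      rw [Ne, Complex.cpow_eq_zero_iff]
      simp [ne_zero_of_re_pos' h]
    rw [show (-(1/2) : ℂ) = -(1/2 : ℂ) by norm_num, Complex.cpow_neg, Complex.cpow_neg,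
      Complex.cpow_neg, ← mul_inv, ← key, mul_inv, mul_assoc,
      inv_mul_cancel₀ (hne hx'), mul_one]

noncomputable def gkr (r : ℝ) (u : ℝ) : ℝ :=
  (4 * Real.pi * r) ^ (-(1 / 2) : ℝ) * Real.exp (-(u ^ 2) / (4 * r))

noncomputable def rho (a : ℂ) : ℝ := (4 * ((4 * a)⁻¹).re)⁻¹

lemma rho_pos {a : ℂ} (ha : 0 < a.re) : 0 < rho a := by
  unfold rho
  have h4 : 0 < (4 * a).re := by simp [Complex.mul_re]; linarith
  have : 0 < ((4 * a)⁻¹).re := by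
    rw [Complex.inv_re]
    exact div_pos h4 (Complex.normSq_pos.2 (fun h => by simp [h] at h4))
  positivity

lemma gkr_pos {r : ℝ} (hr : 0 < r) (u : ℝ) : 0 < gkr r u := by
  unfold gkr
  have : (0:ℝ) < 4 * Real.pi * r := by have := Real.pi_pos; positivity
  positivity

lemma gk_ofReal {r : ℝ} (hr : 0 < r) (u : ℝ) : gk (r : ℂ) u = ((gkr r u : ℝ) : ℂ) := by
  unfold gk gkr
  have h1 : (0:ℝ) ≤ 4 * Real.pi * r := by have := Real.pi_pos; positivity
  rw [Complex.ofReal_mul, Complex.ofReal_cpow h1, Complex.ofReal_exp]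
  push_cast
  ring_nf

-- norm of the kernel in terms of the real kernel with parameter rho a
lemma norm_gk {a : ℂ} (ha : 0 < a.re) (u : ℝ) :
    ‖gk a u‖ = (‖(4 * (Real.pi : ℂ) * a) ^ (-(1 / 2) : ℂ)‖ /
        ((4 * Real.pi * rho a) ^ (-(1 / 2) : ℝ))) * gkr (rho a) u := by
  have hρ := rho_pos ha
  have hpos : (0:ℝ) < (4 * Real.pi * rho a) ^ (-(1 / 2) : ℝ) := by
    have : (0:ℝ) < 4 * Real.pi * rho a := by have := Real.pi_pos; positivity
    positivity
  unfold gk gkr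
  rw [norm_mul, Complex.norm_exp]
  have hre : (-((u ^ 2 : ℝ) : ℂ) / (4 * a)).re = -(u ^ 2) / (4 * rho a) := by
    rw [div_eq_mul_inv, show (-((u ^ 2 : ℝ) : ℂ)) = ((-(u^2) : ℝ) : ℂ) by push_cast; ring,
      Complex.re_ofReal_mul]
    unfold rho
    have hr' : 0 < ((4 * a)⁻¹).re := by
      have h4 : 0 < (4 * a).re := by simp [Complex.mul_re]; linarith
      rw [Complex.inv_re]
      exact div_pos h4 (Complex.normSq_pos.2 (fun h => by simp [h] at h4))
    rw [show (4 * (4 * ((4 * a)⁻¹).re)⁻¹) = (((4 * a)⁻¹).re)⁻¹ by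
      rw [mul_inv, ← mul_assoc, mul_inv_cancel₀ (by norm_num : (4:ℝ) ≠ 0), one_mul]]
    field_simp
  rw [hre]
  field_simp

-- reduction of an (n+2)-chain point with val ≤ n+1 to an (n+1)-chain point
lemma chainPoint_reduce {n : ℕ} (y0 yN : ℝ) (z : Fin (n + 1) → ℝ) (k : Fin (n + 3))
    (hk : (k : ℕ) ≤ n + 1) :
    chainPoint (n + 2) y0 yN z k =
      chainPoint (n + 1) y0 (z (Fin.last n)) (fun i : Fin n => z i.castSucc)
        ⟨(k : ℕ), by omega⟩ := by
  unfold chainPoint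
  by_cases h0 : (k : ℕ) = 0
  · simp [h0]
  · by_cases hN : (k : ℕ) = n + 1
    · rw [dif_neg h0, dif_neg (by omega), dif_neg (by simpa using h0), dif_pos (by simpa using hN)]
      congr 1
      apply Fin.ext
      simp [hN]
    · rw [dif_neg h0, dif_neg (by omega), dif_neg (by simpa using h0),
        dif_neg (by simpa using hN)]
      congr 1

lemma chainPoint_top {n : ℕ} (y0 yN : ℝ) (z : Fin (n + 1) → ℝ) (k : Fin (n + 3))
    (hk : (k : ℕ) = n + 2) : chainPoint (n + 2) y0 yN z k = yN := by
  unfold chainPoint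
  rw [dif_neg (by omega), dif_pos hk]

-- continuity of gk in its real argument
lemma gk_continuous (a : ℂ) : Continuous fun u : ℝ => gk a u := by
  unfold gk
  refine continuous_const.mul (Complex.continuous_exp.comp ?_)
  have : (fun u : ℝ => -((u ^ 2 : ℝ) : ℂ) / (4 * a)) =
      fun u : ℝ => ((u ^ 2 : ℝ) : ℂ) * (-(4 * a)⁻¹) := by
    funext u; ring
  rw [this]
  exact (Complex.continuous_ofReal.comp (continuous_pow 2)).mul continuous_const

-- continuity of a chain point as a function of (t, w)
lemma chainPoint_continuous {n : ℕ} (y0 : ℝ) (k : Fin (n + 2)) :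
    Continuous fun p : ℝ × (Fin n → ℝ) => chainPoint (n + 1) y0 p.1 p.2 k := by
  unfold chainPoint
  by_cases h0 : (k : ℕ) = 0
  · simp only [h0]
    simp only [dif_pos]
    exact continuous_const
  · by_cases hN : (k : ℕ) = n + 1
    · simp only [dif_neg h0, dif_pos hN]
      exact continuous_fst
    · simp only [dif_neg h0, dif_neg hN]
      exact (continuous_apply _).comp continuous_snd

-- integrability of a product of two off-center real Gaussians
lemma integrable_exp_quad (b c d : ℝ) (hb : 0 < b) :
    Integrable fun t : ℝ => Real.exp (-b * t ^ 2 + c * t + d) := by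
  have h := (integrable_cexp_quadratic (b := (b:ℂ)) (by simpa using hb) (c:ℂ) (d:ℂ)).norm
  refine h.congr ?_
  filter_upwards with t
  rw [Complex.norm_exp]
  congr 1
  have : (-(b:ℂ) * (t:ℂ) ^ 2 + (c:ℂ) * (t:ℂ) + (d:ℂ)) =
      (((-b * t ^ 2 + c * t + d : ℝ)) : ℂ) := by push_cast; ring
  rw [this, Complex.ofReal_re]

lemma integrable_gauss2 {R r : ℝ} (hR : 0 < R) (hr : 0 < r) (y0 yN : ℝ) :
    Integrable fun t : ℝ => Real.exp (-(t - y0) ^ 2 / (4 * R)) *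
      Real.exp (-(yN - t) ^ 2 / (4 * r)) := by
  have h := integrable_exp_quad ((4*R)⁻¹ + (4*r)⁻¹)
    (2 * y0 * (4*R)⁻¹ + 2 * yN * (4*r)⁻¹) (-(y0^2 * (4*R)⁻¹) - yN^2 * (4*r)⁻¹)
    (by positivity)
  refine h.congr ?_
  filter_upwards with t
  rw [← Real.exp_add]
  congr 1
  have hR4 : (4*R) ≠ 0 := by positivity
  have hr4 : (4*r) ≠ 0 := by positivity
  field_simp
  ring

-- evaluation of the top intermediate chain point
lemma chainPoint_mid {n : ℕ} (y0 t : ℝ) (w : Fin n → ℝ) (h : n + 1 < n + 2) :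
    chainPoint (n + 1) y0 t w ⟨n + 1, h⟩ = t := by
  unfold chainPoint
  rw [dif_neg (by simp), dif_pos (by simp)]

theorem gk_aux : ∀ (n : ℕ) (a : Fin (n + 1) → ℂ), (∀ j, 0 < (a j).re) → ∀ (y0 yN : ℝ),
    Integrable (fun z : Fin n → ℝ => ∏ j : Fin (n + 1),
      gk (a j) (chainPoint (n + 1) y0 yN z j.succ - chainPoint (n + 1) y0 yN z j.castSucc)) ∧
    (∫ z : Fin n → ℝ, ∏ j : Fin (n + 1),
      gk (a j) (chainPoint (n + 1) y0 yN z j.succ - chainPoint (n + 1) y0 yN z j.castSucc))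
      = gk (∑ j, a j) (yN - y0) := by
  intro n
  induction n with
  | zero =>
    intro a ha y0 yN
    have hconst : (fun z : Fin 0 → ℝ => ∏ j : Fin 1,
        gk (a j) (chainPoint 1 y0 yN z j.succ - chainPoint 1 y0 yN z j.castSucc)) =
        fun _ : Fin 0 → ℝ => gk (a 0) (yN - y0) := by
      funext z
      rw [Fin.prod_univ_one]
      rfl
    haveI : IsProbabilityMeasure (volume : Measure (Fin 0 → ℝ)) :=
      ⟨by rw [volume_pi, Measure.pi_univ]; simp⟩
    rw [hconst]
    refine ⟨integrable_const _, ?_⟩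
    rw [integral_const, probReal_univ, Fin.sum_univ_one]
    simp
  | succ n IH =>
    intro a ha y0 yN
    set a' : Fin (n + 1) → ℂ := fun j => a j.castSucc with ha'def
    have ha' : ∀ j, 0 < (a' j).re := fun j => ha _
    set aL : ℂ := a (Fin.last (n + 1)) with haLdef
    have haL : 0 < aL.re := ha _
    set e : (Fin (n + 1) → ℝ) ≃ᵐ ℝ × (Fin n → ℝ) :=
      MeasurableEquiv.piFinSuccAbove (fun _ : Fin (n + 1) => ℝ) (Fin.last n) with hedef
    set g : ℝ × (Fin n → ℝ) → ℂ := fun p =>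
      (∏ j : Fin (n + 1), gk (a' j)
        (chainPoint (n + 1) y0 p.1 p.2 j.succ - chainPoint (n + 1) y0 p.1 p.2 j.castSucc)) *
        gk aL (yN - p.1) with hgdef
    have hmp : MeasurePreserving e (volume : Measure (Fin (n + 1) → ℝ))
        ((volume : Measure ℝ).prod (volume : Measure (Fin n → ℝ))) :=
      measurePreserving_piFinSuccAbove (fun _ : Fin (n + 1) => (volume : Measure ℝ)) (Fin.last n)
    have hfg : ∀ z : Fin (n + 1) → ℝ, (∏ j : Fin (n + 2),
        gk (a j) (chainPoint (n + 2) y0 yN z j.succ - chainPoint (n + 2) y0 yN z j.castSucc)) =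
        g (e z) := by
      intro z
      have he1 : (e z).1 = z (Fin.last n) := rfl
      have he2 : (e z).2 = fun i : Fin n => z i.castSucc := by
        funext i
        show z ((Fin.last n).succAbove i) = z i.castSucc
        rw [Fin.succAbove_last]
      rw [Fin.prod_univ_castSucc]
      rw [hgdef]
      simp only [he1, he2]
      congr 1
      · apply Finset.prod_congr rfl
        intro j _
        have h1 : ((j.castSucc.succ : Fin (n + 3)) : ℕ) = (j : ℕ) + 1 := by simp
        have h2 : ((j.castSucc.castSucc : Fin (n + 3)) : ℕ) = (j : ℕ) := by simp
        rw [chainPoint_reduce y0 yN z j.castSucc.succ (by omega),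
          chainPoint_reduce y0 yN z j.castSucc.castSucc (by omega)]
        congr 2
      · have h3 : (((Fin.last (n + 1)).succ : Fin (n + 3)) : ℕ) = n + 2 := by simp
        have h4 : (((Fin.last (n + 1)).castSucc : Fin (n + 3)) : ℕ) = n + 1 := by simp
        rw [chainPoint_top y0 yN z _ h3, chainPoint_reduce y0 yN z _ (by omega)]
        congr 2
        rw [show (⟨(((Fin.last (n + 1)).castSucc : Fin (n + 3)) : ℕ), by omega⟩ : Fin (n + 2)) =
          (⟨n + 1, by omega⟩ : Fin (n + 2)) by apply Fin.ext; simp]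
        rw [chainPoint_mid]
    have hgc : Continuous g := by
      rw [hgdef]
      refine Continuous.mul ?_ ?_
      · exact continuous_finset_prod _ (fun j _ => (gk_continuous (a' j)).comp
          ((chainPoint_continuous y0 j.succ).sub (chainPoint_continuous y0 j.castSucc)))
      · exact (gk_continuous aL).comp (continuous_const.sub continuous_fst)
    have h1 : ∀ t : ℝ, Integrable (fun w : Fin n → ℝ => g (t, w)) := by
      intro t
      simp only [hgdef]
      exact (IH a' ha' y0 t).1.mul_const _
    have hRpos : 0 < ∑ j : Fin (n + 1), rho (a' j) :=
      Finset.sum_pos (fun j _ => rho_pos (ha' j)) Finset.univ_nonempty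
    have hnorm : ∀ t : ℝ, (∫ w : Fin n → ℝ, ‖g (t, w)‖) =
        (∏ j : Fin (n + 1), ‖(4 * (Real.pi : ℂ) * a' j) ^ (-(1 / 2) : ℂ)‖ /
          ((4 * Real.pi * rho (a' j)) ^ (-(1 / 2) : ℝ))) *
          gkr (∑ j : Fin (n + 1), rho (a' j)) (t - y0) * ‖gk aL (yN - t)‖ := by
      intro t
      have hptw : ∀ w : Fin n → ℝ, ‖g (t, w)‖ =
          ((∏ j : Fin (n + 1), ‖(4 * (Real.pi : ℂ) * a' j) ^ (-(1 / 2) : ℂ)‖ /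
            ((4 * Real.pi * rho (a' j)) ^ (-(1 / 2) : ℝ))) *
          (∏ j : Fin (n + 1), gkr (rho (a' j))
            (chainPoint (n + 1) y0 t w j.succ - chainPoint (n + 1) y0 t w j.castSucc))) *
          ‖gk aL (yN - t)‖ := by
        intro w
        simp only [hgdef, norm_mul]
        congr 1
        rw [norm_prod, ← Finset.prod_mul_distrib]
        apply Finset.prod_congr rfl
        intro j _
        exact norm_gk (ha' j) _
      rw [integral_congr_ae (Filter.Eventually.of_forall hptw), integral_mul_const,
        integral_const_mul]
      congr 2
      -- ∫ w, ∏ gkr = gkr (∑ rho) (t - y0)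
      have hcIH := (IH (fun j => ((rho (a' j) : ℝ) : ℂ))
        (fun j => by simpa using rho_pos (ha' j)) y0 t).2
      have hc : ∀ w : Fin n → ℝ, (((∏ j : Fin (n + 1), gkr (rho (a' j))
          (chainPoint (n + 1) y0 t w j.succ - chainPoint (n + 1) y0 t w j.castSucc)) : ℝ) : ℂ)
          = ∏ j : Fin (n + 1), gk ((rho (a' j) : ℝ) : ℂ)
            (chainPoint (n + 1) y0 t w j.succ - chainPoint (n + 1) y0 t w j.castSucc) := by
        intro w
        rw [Complex.ofReal_prod]
        exact Finset.prod_congr rfl fun j _ => (gk_ofReal (rho_pos (ha' j)) _).symm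
      have hcast : (((∫ w : Fin n → ℝ, ∏ j : Fin (n + 1), gkr (rho (a' j))
          (chainPoint (n + 1) y0 t w j.succ - chainPoint (n + 1) y0 t w j.castSucc)) : ℝ) : ℂ)
          = (((gkr (∑ j : Fin (n + 1), rho (a' j)) (t - y0)) : ℝ) : ℂ) := by
        rw [show ((((∫ w : Fin n → ℝ, ∏ j : Fin (n + 1), gkr (rho (a' j))
            (chainPoint (n + 1) y0 t w j.succ - chainPoint (n + 1) y0 t w j.castSucc)) : ℝ)) : ℂ)
            = ∫ w : Fin n → ℝ, (((∏ j : Fin (n + 1), gkr (rho (a' j))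
            (chainPoint (n + 1) y0 t w j.succ - chainPoint (n + 1) y0 t w j.castSucc) : ℝ)) : ℂ)
          from (integral_ofReal (𝕜 := ℂ)).symm,
          integral_congr_ae (Filter.Eventually.of_forall hc), hcIH,
          ← Complex.ofReal_sum, gk_ofReal hRpos]
      exact_mod_cast hcast
    have h2 : Integrable (fun t : ℝ => ∫ w : Fin n → ℝ, ‖g (t, w)‖) := by
      rw [funext hnorm]
      have hρL := rho_pos haL
      refine ((integrable_gauss2 hRpos hρL y0 yN).const_mul
        ((∏ j : Fin (n + 1), ‖(4 * (Real.pi : ℂ) * a' j) ^ (-(1 / 2) : ℂ)‖ /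
          ((4 * Real.pi * rho (a' j)) ^ (-(1 / 2) : ℝ))) *
          ((4 * Real.pi * (∑ j : Fin (n + 1), rho (a' j))) ^ (-(1 / 2) : ℝ)) *
          (‖(4 * (Real.pi : ℂ) * aL) ^ (-(1 / 2) : ℂ)‖ /
            ((4 * Real.pi * rho aL) ^ (-(1 / 2) : ℝ)) *
            ((4 * Real.pi * rho aL) ^ (-(1 / 2) : ℝ))))).congr
        (Filter.Eventually.of_forall fun t => ?_)
      dsimp only
      rw [norm_gk haL]
      unfold gkr
      ring
    have hInt : Integrable g ((volume : Measure ℝ).prod (volume : Measure (Fin n → ℝ))) :=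
      (integrable_prod_iff hgc.aestronglyMeasurable).2 ⟨ae_of_all _ h1, h2⟩
    have hS' : 0 < (∑ j, a' j).re := by
      rw [Complex.re_sum]
      exact Finset.sum_pos (fun j _ => ha' j) Finset.univ_nonempty
    have hmain := gk_conv hS' haL y0 yN
    constructor
    · rw [funext hfg]
      exact (hmp.integrable_comp_emb e.measurableEmbedding).2 hInt
    · rw [funext hfg, hmp.integral_comp e.measurableEmbedding g, integral_prod g hInt]
      have hinner : ∀ t : ℝ, (∫ w : Fin n → ℝ, g (t, w)) =
          gk (∑ j, a' j) (t - y0) * gk aL (yN - t) := by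
        intro t
        simp only [hgdef]
        rw [integral_mul_const, (IH a' ha' y0 t).2]
      rw [integral_congr_ae (Filter.Eventually.of_forall hinner), hmain.2]
      congr 1
      rw [show (∑ j : Fin (n + 1 + 1), a j) =
        (∑ j : Fin (n + 1), a j.castSucc) + a (Fin.last (n + 1)) from Fin.sum_univ_castSucc a]

/-- **Chapman–Kolmogorov identity for complex Gaussian kernels** (the
one-dimensional core of the discretized path integral of Appendix B).
For `a₁, …, a_N ∈ ℂ` with positive real parts and endpoints `y₀, y_N ∈ ℝ`,
integrating out the intermediate points composes the one-step kernels
`(4πa_j)^{-1/2} e^{−(y_j − y_{j−1})²/(4a_j)}` into the single kernel with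
parameter `a₁ + ⋯ + a_N`.  Powers are principal-branch complex powers. -/
theorem gaussian_kernel_composition (N : ℕ) (hN : 1 ≤ N)
    (a : Fin N → ℂ) (ha : ∀ j, 0 < (a j).re) (y0 yN : ℝ) :
    Integrable (fun z : Fin (N - 1) → ℝ =>
        ∏ j : Fin N,
          ((4 * (Real.pi : ℂ) * a j) ^ (-(1 / 2) : ℂ) *
            Complex.exp (-(((chainPoint N y0 yN z j.succ -
              chainPoint N y0 yN z j.castSucc) ^ 2 : ℝ) : ℂ) / (4 * a j)))) ∧
    (∫ z : Fin (N - 1) → ℝ,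
        ∏ j : Fin N,
          ((4 * (Real.pi : ℂ) * a j) ^ (-(1 / 2) : ℂ) *
            Complex.exp (-(((chainPoint N y0 yN z j.succ -
              chainPoint N y0 yN z j.castSucc) ^ 2 : ℝ) : ℂ) / (4 * a j))))
      = (4 * (Real.pi : ℂ) * ∑ j, a j) ^ (-(1 / 2) : ℂ) *
          Complex.exp (-(((yN - y0) ^ 2 : ℝ) : ℂ) / (4 * ∑ j, a j)) := by
  obtain ⟨n, rfl⟩ : ∃ n, N = n + 1 := ⟨N - 1, (Nat.succ_pred_eq_of_pos hN).symm⟩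
  exact gk_aux n a ha y0 yN
end

section
/- Let E > 0 and t ∈ ℝ. Then the limit as ε → 0⁺ of (−i/(2π)) ∫_ℝ e^{−iωt} / (E² − ω² − iε) dω exists and equals e^{−iE|t|} / (2E). -/
open MeasureTheory Complex Filter

open Set
open scoped Real FourierTransform

noncomputable section

lemma integral_cexp_Ioi (c : ℂ) (hc : c.re < 0) :
    ∫ s in Ioi (0:ℝ), Complex.exp (c * s) = -1 / c := by
  have hc0 : c ≠ 0 := fun h => by simp [h] at hc
  have hderiv : ∀ x ∈ Ici (0:ℝ), HasDerivAt (fun s : ℝ => Complex.exp (c * s) / c)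
      (Complex.exp (c * x)) x := by
    intro x _
    have h1 : HasDerivAt (fun s : ℝ => (s : ℂ)) 1 x := Complex.ofRealCLM.hasDerivAt
    have h2 : HasDerivAt (fun s : ℝ => c * (s:ℂ)) c x := by
      simpa using h1.const_mul c
    have h4 := h2.cexp.div_const c
    simpa [mul_comm, mul_div_assoc, mul_div_cancel_left₀ _ hc0] using h4
  have hint : IntegrableOn (fun s : ℝ => Complex.exp (c * s)) (Ioi (0:ℝ)) := by
    apply Integrable.mono' (exp_neg_integrableOn_Ioi 0 (by linarith : 0 < -c.re))
    · exact (Complex.continuous_exp.comp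
        (continuous_const.mul Complex.continuous_ofReal)).aestronglyMeasurable
    · filter_upwards with x
      rw [Complex.norm_exp]
      simp [mul_comm]
  have hlim : Tendsto (fun x : ℝ => Complex.exp (c * x) / c) atTop (nhds 0) := by
    have h0 : Tendsto (fun x : ℝ => Complex.exp (c * x)) atTop (nhds 0) := by
      rw [tendsto_zero_iff_norm_tendsto_zero]
      have : Tendsto (fun x : ℝ => Real.exp (c.re * x)) atTop (nhds 0) := by
        apply Real.tendsto_exp_atBot.comp
        have h5 : Tendsto (fun x : ℝ => (-c.re) * x) atTop atTop :=
          Tendsto.const_mul_atTop (by linarith) tendsto_id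
        have h6 := tendsto_neg_atTop_atBot.comp h5
        refine h6.congr fun x => by simp [Function.comp]; try ring
      refine this.congr fun x => ?_
      rw [Complex.norm_exp]
      simp
    simpa using h0.div_const c
  rw [integral_Ioi_of_hasDerivAt_of_tendsto' hderiv hint hlim]
  simp [neg_div]

lemma integrable_profile {a : ℂ} (ha : a.im < 0) (b : ℝ) :
    Integrable (fun x : ℝ => Complex.exp (-Complex.I * a * |x| + b * x * Complex.I)) := by
  have hmeas : AEStronglyMeasurable
      (fun x : ℝ => Complex.exp (-Complex.I * a * |x| + b * x * Complex.I)) volume := by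
    refine (Complex.continuous_exp.comp ?_).aestronglyMeasurable
    fun_prop
  have hIoi : IntegrableOn (fun x : ℝ => Real.exp (a.im * |x|)) (Ioi (0:ℝ)) := by
    apply (exp_neg_integrableOn_Ioi 0 (by linarith : 0 < -a.im)).congr_fun ?_ measurableSet_Ioi
    intro x hx
    simp only [abs_of_pos (mem_Ioi.mp hx)]
    ring_nf
  have hIic : IntegrableOn (fun x : ℝ => Real.exp (a.im * |x|)) (Iic (0:ℝ)) := by
    rw [← Measure.map_neg_eq_self (volume : Measure ℝ)]
    have m : MeasurableEmbedding fun x : ℝ => -x := (Homeomorph.neg ℝ).measurableEmbedding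
    rw [m.integrableOn_map_iff]
    simp_rw [Function.comp_def, abs_neg, neg_preimage, neg_Iic, neg_zero]
    exact Iff.mpr integrableOn_Ici_iff_integrableOn_Ioi hIoi
  have hmaj : Integrable (fun x : ℝ => Real.exp (a.im * |x|)) := by
    rw [← integrableOn_univ, ← Iic_union_Ioi (a := (0:ℝ))]
    exact hIic.union hIoi
  apply Integrable.mono' hmaj hmeas
  filter_upwards with x
  rw [Complex.norm_exp]
  apply le_of_eq
  congr 1
  simp [Complex.mul_re]


lemma shifted_ne {a : ℂ} (ha : a.im < 0) (r : ℝ) : a + r ≠ 0 := by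
  intro h
  have := congrArg Complex.im h
  simp at this
  linarith

lemma fourier_profile {a : ℂ} (ha : a.im < 0) (ξ : ℝ) :
    𝓕 (fun x : ℝ => Complex.exp (-Complex.I * a * |x|)) ξ
      = -2 * Complex.I * a / (a ^ 2 - (2 * π * ξ) ^ 2) := by
  rw [Real.fourier_real_eq_integral_exp_smul]
  have hrw : ∀ v : ℝ, Complex.exp (↑(-2 * π * v * ξ) * Complex.I) •
      Complex.exp (-Complex.I * a * |v|)
      = Complex.exp (-Complex.I * a * |v| + (-(2*π*ξ)) * v * Complex.I) := by
    intro v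
    rw [smul_eq_mul, ← Complex.exp_add]
    congr 1
    push_cast
    ring
  simp_rw [hrw]
  have hint := integrable_profile ha (-(2*π*ξ))
  push_cast at hint
  rw [← intervalIntegral.integral_Iic_add_Ioi hint.integrableOn hint.integrableOn]
  have hIic : (∫ x in Iic (0:ℝ),
        Complex.exp (-Complex.I * a * |x| + (-(2*π*ξ)) * x * Complex.I))
      = ∫ x in Ioi (0:ℝ), Complex.exp ((-Complex.I * (a - 2*π*ξ)) * x) := by
    rw [show Iic (0:ℝ) = Iic (-0) by norm_num, ← integral_comp_neg_Ioi]
    refine setIntegral_congr_fun measurableSet_Ioi fun x hx => ?_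
    rw [abs_neg, abs_of_pos (mem_Ioi.mp hx)]
    congr 1
    push_cast
    ring
  have hIoi : (∫ x in Ioi (0:ℝ),
        Complex.exp (-Complex.I * a * |x| + (-(2*π*ξ)) * x * Complex.I))
      = ∫ x in Ioi (0:ℝ), Complex.exp ((-Complex.I * (a + 2*π*ξ)) * x) := by
    refine setIntegral_congr_fun measurableSet_Ioi fun x hx => ?_
    rw [abs_of_pos (mem_Ioi.mp hx)]
    congr 1
    push_cast
    ring
  rw [hIic, hIoi, integral_cexp_Ioi _ (by simp [ha] : (-Complex.I * (a - 2*π*ξ)).re < 0),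
    integral_cexp_Ioi _ (by simp [ha] : (-Complex.I * (a + 2*π*ξ)).re < 0)]
  have h1 : a - 2*π*ξ ≠ 0 := by
    have := shifted_ne ha (-(2*π*ξ)); push_cast at this ⊢; simpa [sub_eq_add_neg] using this
  have h2 : a + 2*π*ξ ≠ 0 := by
    have := shifted_ne ha (2*π*ξ); push_cast at this ⊢; simpa using this
  have hI : (Complex.I : ℂ) ≠ 0 := Complex.I_ne_zero
  rw [show a ^ 2 - ((2:ℂ) * π * ξ) ^ 2 = (a + 2*π*ξ) * (a - 2*π*ξ) by ring]
  field_simp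
  ring_nf
  rw [Complex.I_sq]
  ring


lemma denom_lb {a : ℂ} (hre : 0 < a.re) (him : a.im < 0) (ξ : ℝ) :
    0 < -(a^2).im ∧ -(a^2).im ≤ ‖a ^ 2 - ((2 * π * ξ : ℝ) : ℂ) ^ 2‖ := by
  have him2 : (a^2).im = 2 * a.re * a.im := by simp [sq, Complex.mul_im]; ring
  have hδ : 0 < -(a^2).im := by rw [him2]; nlinarith
  refine ⟨hδ, ?_⟩
  have h1 : |(a ^ 2 - ((2 * π * ξ : ℝ) : ℂ) ^ 2).im| ≤ ‖a ^ 2 - ((2 * π * ξ : ℝ):ℂ) ^ 2‖ :=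
    Complex.abs_im_le_norm _
  have h2 : (a ^ 2 - ((2 * π * ξ : ℝ):ℂ) ^ 2).im = (a^2).im := by
    rw [Complex.sub_im]
    norm_num [sq, Complex.mul_im, Complex.mul_re]
  rw [h2] at h1
  calc -(a^2).im ≤ |(a^2).im| := neg_le_abs _
  _ ≤ _ := h1

lemma integrable_fourier_profile {a : ℂ} (hre : 0 < a.re) (him : a.im < 0) :
    Integrable (𝓕 (fun x : ℝ => Complex.exp (-Complex.I * a * |x|))) := by
  set δ := -(a^2).im with hδdef
  obtain ⟨hδ, -⟩ := denom_lb hre him 0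
  set M := ‖a^2‖ with hM
  set C : ℝ := (1 + M)/δ + 1 with hC
  have hM0 : (0:ℝ) ≤ M := norm_nonneg _
  have hCpos : 0 < C := by
    have : (0:ℝ) ≤ (1 + M)/δ := div_nonneg (by linarith) hδ.le
    rw [hC]; linarith
  have hDpos : ∀ ξ : ℝ, 0 < ‖a ^ 2 - ((2 * π * ξ : ℝ):ℂ) ^ 2‖ := fun ξ =>
    lt_of_lt_of_le hδ (denom_lb hre him ξ).2
  have hbound : ∀ ξ : ℝ, (1 + ξ^2) ≤ C * ‖a ^ 2 - ((2 * π * ξ : ℝ):ℂ) ^ 2‖ := by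
    intro ξ
    set D := ‖a ^ 2 - ((2 * π * ξ : ℝ):ℂ) ^ 2‖ with hD
    have hrev : (2*π*ξ)^2 - M ≤ D := by
      have := norm_sub_norm_le (((2 * π * ξ : ℝ):ℂ) ^ 2) (a^2)
      calc (2*π*ξ)^2 - M ≤ ‖((2 * π * ξ : ℝ):ℂ) ^ 2‖ - ‖a^2‖ := by
            rw [hM]
            apply sub_le_sub_right
            rw [show (((2 * π * ξ:ℝ)):ℂ)^2 = ((((2*π*ξ)^2 : ℝ)):ℂ) by push_cast; ring]
            rw [Complex.norm_real]
            exact le_abs_self _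
      _ ≤ ‖((2 * π * ξ : ℝ):ℂ) ^ 2 - a^2‖ := this
      _ = D := by rw [hD, norm_sub_rev]
    have hξ2 : ξ^2 ≤ (2*π*ξ)^2 := by
      have : (1:ℝ) ≤ (2*π)^2 := by nlinarith [Real.pi_gt_three]
      nlinarith [sq_nonneg ξ]
    have hδD : δ ≤ D := (denom_lb hre him ξ).2
    calc 1 + ξ^2 ≤ 1 + M + ((2*π*ξ)^2 - M) := by nlinarith
    _ ≤ 1 + M + D := by linarith
    _ ≤ ((1+M)/δ) * D + D := by
        have heq : 1 + M = ((1+M)/δ) * δ := (div_mul_cancel₀ _ hδ.ne').symm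
        have h7 : ((1+M)/δ) * δ ≤ ((1+M)/δ) * D :=
          mul_le_mul_of_nonneg_left hδD (div_nonneg (by linarith) hδ.le)
        linarith
    _ = C * D := by rw [hC]; ring
  have hcontD : Continuous fun ξ : ℝ => a ^ 2 - ((2 * π * ξ : ℝ):ℂ) ^ 2 := by fun_prop
  have hmeas : AEStronglyMeasurable
      (fun ξ : ℝ => -2 * Complex.I * a / (a ^ 2 - ((2 * π * ξ:ℝ)) ^ 2)) volume := by
    apply Continuous.aestronglyMeasurable
    apply Continuous.div continuous_const hcontD
    intro ξ
    exact fun h => (hDpos ξ).ne' (by rw [h]; simp)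
  have hmaj : Integrable (fun ξ : ℝ => (2 * ‖a‖ * C) * (1 + ξ^2)⁻¹) :=
    integrable_inv_one_add_sq.const_mul _
  have hint : Integrable (fun ξ : ℝ => -2 * Complex.I * a / (a ^ 2 - ((2 * π * ξ:ℝ)) ^ 2)) := by
    apply Integrable.mono' hmaj hmeas
    filter_upwards with ξ
    rw [norm_div]
    have hnum : ‖-2 * Complex.I * a‖ = 2 * ‖a‖ := by
      simp [map_mul]
    rw [hnum]
    have h1 : ‖a ^ 2 - ((2 * π * ξ:ℝ):ℂ) ^ 2‖ ≥ (1 + ξ^2) / C :=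
      (div_le_iff₀ hCpos).mpr (by linarith [hbound ξ])
    have h2 : (0:ℝ) < 1 + ξ^2 := by positivity
    rw [div_le_iff₀ (hDpos ξ), mul_comm (2 * ‖a‖ * C)]
    calc 2 * ‖a‖ = ((1+ξ^2)/C) * ((2 * ‖a‖ * C) / (1+ξ^2)) := by
          field_simp
    _ ≤ ‖a ^ 2 - ((2 * π * ξ:ℝ):ℂ) ^ 2‖ * ((2 * ‖a‖ * C)/(1+ξ^2)) := by
          apply mul_le_mul_of_nonneg_right h1
          positivity
    _ = (1 + ξ^2)⁻¹ * (2 * ‖a‖ * C) * ‖a ^ 2 - ((2 * π * ξ:ℝ):ℂ) ^ 2‖ := by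
          field_simp
  apply hint.congr
  filter_upwards with ξ
  rw [fourier_profile him ξ]
  push_cast
  ring_nf


lemma key_integral {a : ℂ} (hre : 0 < a.re) (him : a.im < 0) (t : ℝ) :
    ∫ ω : ℝ, Complex.exp (-Complex.I * ω * t) / (a ^ 2 - ω ^ 2)
      = π * Complex.I * Complex.exp (-Complex.I * a * |t|) / a := by
  have ha0 : a ≠ 0 := fun h => by rw [h] at him; simp at him
  set f : ℝ → ℂ := fun x => Complex.exp (-Complex.I * a * |x|) with hf
  have hf_int : Integrable f := by
    have h := integrable_profile him 0
    exact h.congr (Filter.Eventually.of_forall fun x => by simp [hf])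
  have hf_cont : Continuous f := by
    apply Complex.continuous_exp.comp
    fun_prop
  have hinv : 𝓕⁻ (𝓕 f) t = f t :=
    hf_int.fourierInv_fourier_eq (integrable_fourier_profile hre him) hf_cont.continuousAt
  rw [Real.fourierInv_eq_fourier_neg,
    Real.fourier_real_eq_integral_exp_smul] at hinv
  set G : ℝ → ℂ := fun ω => Complex.exp (-Complex.I * ω * t) / (a ^ 2 - ω ^ 2) with hG
  have hGrw : ∀ ξ : ℝ, Complex.exp (↑(-2 * π * ξ * (-t)) * Complex.I) • (𝓕 f) ξ
      = (-2 * Complex.I * a) * G (2 * π * (-ξ)) := by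
    intro ξ
    rw [smul_eq_mul, fourier_profile him ξ]
    have h1 : Complex.exp (↑(-2 * π * ξ * (-t)) * Complex.I)
        = Complex.exp (-Complex.I * ((2*π*(-ξ)):ℝ) * t) := by
      congr 1
      push_cast
      ring
    have h2 : (a ^ 2 - ((2 * π * ξ : ℝ):ℂ) ^ 2) = a ^ 2 - (((2 * π * (-ξ)):ℝ):ℂ) ^ 2 := by
      push_cast
      ring
    rw [h1, hG]
    simp only []
    rw [← h2]
    push_cast
    ring
  rw [integral_congr_ae (Filter.Eventually.of_forall hGrw)] at hinv
  rw [integral_const_mul] at hinv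
  have hneg : ∫ ξ : ℝ, G (2 * π * (-ξ)) = ∫ ξ : ℝ, G (2 * π * ξ) := by
    have := integral_neg_eq_self (fun ξ : ℝ => G (2 * π * ξ)) volume
    simpa using this
  rw [hneg, MeasureTheory.Measure.integral_comp_mul_left G (2*π)] at hinv
  have h2π : (0:ℝ) < 2 * π := by positivity
  rw [abs_of_pos (inv_pos.mpr h2π)] at hinv
  -- hinv : -2*I*a * ((2*π)⁻¹ • ∫ G) = f t
  have hsmul : ((2*π)⁻¹ : ℝ) • (∫ ω, G ω) = (((2*π)⁻¹ : ℝ) : ℂ) * ∫ ω, G ω := by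
    rw [Complex.real_smul]
  rw [hsmul] at hinv
  have hπ : ((π:ℂ)) ≠ 0 := by
    exact_mod_cast Real.pi_ne_zero
  have hft : f t = Complex.exp (-Complex.I * a * |t|) := rfl
  rw [hft] at hinv
  push_cast at hinv
  field_simp at hinv
  rw [eq_div_iff ha0]
  simp only [neg_mul] at hinv ⊢
  linear_combination Complex.I * hinv + (a * ∫ ω : ℝ, G ω) * Complex.I_sq


/-- **Positive/negative frequency decomposition of the Feynman propagator**
(analytic core). For `E > 0` and `t ∈ ℝ`, the `iε`-regularized frequency
integral `(−i/(2π)) ∫_ℝ e^{−iωt}/(E² − ω² − iε) dω` tends, as `ε → 0⁺`, to the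
on-shell factor `e^{−iE|t|}/(2E)`. -/
theorem propagator_frequency_integral_limit (E t : ℝ) (hE : 0 < E) :
    Tendsto
      (fun ε : ℝ =>
        (-Complex.I / (2 * (Real.pi : ℂ))) *
          ∫ ω : ℝ, Complex.exp (-Complex.I * (ω : ℂ) * (t : ℂ)) /
            ((E : ℂ) ^ 2 - (ω : ℂ) ^ 2 - (ε : ℂ) * Complex.I))
      (nhdsWithin 0 (Set.Ioi 0))
      (nhds (Complex.exp (-Complex.I * (E : ℂ) * (|t| : ℝ)) / (2 * (E : ℂ)))) := by
  set A : ℝ → ℂ := fun ε => Complex.exp (Complex.log ((E:ℂ)^2 - ε * Complex.I) / 2) with hA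
  have hπ : ((π:ℂ)) ≠ 0 := by exact_mod_cast Real.pi_ne_zero
  -- basic facts for ε > 0
  have hz_re : ∀ ε : ℝ, ((E:ℂ)^2 - ε * Complex.I).re = E^2 := by
    intro ε; simp [Complex.sub_re, sq, Complex.mul_re]
  have hz_im : ∀ ε : ℝ, ((E:ℂ)^2 - ε * Complex.I).im = -ε := by
    intro ε; simp [Complex.sub_im, sq, Complex.mul_im]
  have key : ∀ ε : ℝ, 0 < ε →
      (-Complex.I / (2 * (π : ℂ))) *
          (∫ ω : ℝ, Complex.exp (-Complex.I * (ω : ℂ) * (t : ℂ)) /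
            ((E : ℂ) ^ 2 - (ω : ℂ) ^ 2 - (ε : ℂ) * Complex.I))
        = Complex.exp (-Complex.I * A ε * |t|) / (2 * A ε) := by
    intro ε hε
    set z : ℂ := (E:ℂ)^2 - ε * Complex.I with hz
    have hz0 : z ≠ 0 := by
      intro h
      have := congrArg Complex.im h
      rw [hz_im ε] at this
      simp at this
      linarith
    have harg_neg : z.arg < 0 := Complex.arg_neg_iff.mpr (by rw [hz_im ε]; linarith)
    have harg_gt : -(π/2) < z.arg := by
      have : |z.arg| < π/2 := Complex.abs_arg_lt_pi_div_two_iff.mpr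
        (Or.inl (by rw [hz_re ε]; positivity))
      have := abs_lt.mp this
      linarith [this.1]
    have hhalf_im : (Complex.log z / 2).im = z.arg / 2 := by
      rw [Complex.div_im]
      simp [Complex.log_im]
      ring
    have hhalf_im_neg : (Complex.log z / 2).im < 0 := by rw [hhalf_im]; linarith
    have hhalf_im_gt : -(π/2) < (Complex.log z / 2).im := by
      rw [hhalf_im]
      have hπpos := Real.pi_pos
      linarith
    have hAim : (A ε).im < 0 := by
      rw [hA]
      simp only [Complex.exp_im]
      apply mul_neg_of_pos_of_neg (Real.exp_pos _)
      apply Real.sin_neg_of_neg_of_neg_pi_lt hhalf_im_neg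
      have hπpos := Real.pi_pos
      linarith
    have hAre : 0 < (A ε).re := by
      rw [hA]
      simp only [Complex.exp_re]
      apply mul_pos (Real.exp_pos _)
      apply Real.cos_pos_of_mem_Ioo
      constructor
      · exact hhalf_im_gt
      · calc (Complex.log z / 2).im < 0 := hhalf_im_neg
        _ < π / 2 := by positivity
    have hA2 : (A ε)^2 = z := by
      have h1 : A ε * A ε = Complex.exp (Complex.log z / 2 + Complex.log z / 2) :=
        (Complex.exp_add _ _).symm
      rw [sq, h1, show Complex.log z / 2 + Complex.log z / 2 = Complex.log z by ring,
        Complex.exp_log hz0]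
    have hcongr : ∀ ω : ℝ, (E : ℂ) ^ 2 - (ω : ℂ) ^ 2 - (ε : ℂ) * Complex.I
        = (A ε)^2 - (ω:ℂ)^2 := by
      intro ω
      rw [hA2, hz]
      ring
    simp_rw [hcongr]
    rw [key_integral hAre hAim t]
    have hA0 : A ε ≠ 0 := fun h => by rw [h] at hAim; simp at hAim
    field_simp
    ring_nf
    rw [show (Complex.I)^2 = -1 from Complex.I_sq]
    ring
  -- the limit of A
  have hA_tendsto : Tendsto A (nhdsWithin 0 (Set.Ioi 0)) (nhds (E:ℂ)) := by
    have hin : ContinuousAt (fun ε : ℝ => (E:ℂ)^2 - ε * Complex.I) 0 := by fun_prop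
    have hslit : ((E:ℂ)^2 - ((0:ℝ):ℂ) * Complex.I) ∈ Complex.slitPlane := by
      apply Complex.mem_slitPlane_iff.mpr
      left
      rw [hz_re 0]
      positivity
    have hlog : ContinuousAt (fun ε : ℝ => Complex.log ((E:ℂ)^2 - ε * Complex.I)) 0 :=
      ContinuousAt.comp (g := Complex.log)
        (f := fun ε : ℝ => (E:ℂ)^2 - ε * Complex.I) (x := (0:ℝ))
        (continuousAt_clog hslit) hin
    have hcont : ContinuousAt (fun ε : ℝ => Complex.exp (Complex.log ((E:ℂ)^2 - ε * Complex.I) / 2)) 0 :=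
      Complex.continuous_exp.continuousAt.comp (hlog.div_const 2)
    have h0 : Complex.exp (Complex.log ((E:ℂ)^2 - (0:ℝ) * Complex.I) / 2) = (E:ℂ) := by
      have h1 : ((E:ℂ)^2 - (0:ℝ) * Complex.I) = (((E^2 : ℝ)):ℂ) := by push_cast; ring
      rw [h1, ← Complex.ofReal_log (by positivity : (0:ℝ) ≤ E^2)]
      rw [show ((Real.log (E^2) : ℂ)) / 2 = ((Real.log (E^2) / 2 : ℝ) : ℂ) by push_cast; ring]
      rw [← Complex.ofReal_exp]
      norm_cast
      rw [show Real.log (E^2) = 2 * Real.log E by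
        rw [sq, Real.log_mul hE.ne' hE.ne']; ring]
      rw [show (2 * Real.log E) / 2 = Real.log E by ring]
      exact Real.exp_log hE
    have := hcont.tendsto
    rw [h0] at this
    exact this.mono_left nhdsWithin_le_nhds
  -- conclude
  have hg_cont : ContinuousAt (fun a : ℂ => Complex.exp (-Complex.I * a * |t|) / (2 * a)) (E:ℂ) := by
    apply ContinuousAt.div
    · apply Complex.continuous_exp.continuousAt.comp
      fun_prop
    · fun_prop
    · exact mul_ne_zero two_ne_zero (by exact_mod_cast hE.ne')
  have hmain := hg_cont.tendsto.comp hA_tendsto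
  apply hmain.congr'
  filter_upwards [self_mem_nhdsWithin] with ε hε
  exact (key ε hε).symm


end
end
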